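/- arXiv:2109.05122 — 2 statements merged into one kernel-verified Lean document; each statement's English description precedes it below -/
import Mathlib

section
/- Assume all SAIRS parameters are positive. If (S̄, Ā, Ī) is an equilibrium of the SAIRS system lying on the boundary of Γ = {S,A,I ≥ 0, S+A+I ≤ 1} (i.e. S̄=0 or Ā=0 or Ī=0 or S̄+Ā+Ī=1), then (S̄, Ā, Ī) = ((μ+γ)/(μ+ν+γ), 0, 0). -/
/-- The DFE is the unique equilibrium of the SAIRS system on the boundary of Γ. -/
theorem SAIRS_unique_boundary_equilibrium
    (μ ν γ α δA δI βA βI : ℝ)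
    (hμ : 0 < μ) (hν : 0 < ν) (hγ : 0 < γ) (hα : 0 < α)
    (hδA : 0 < δA) (hδI : 0 < δI) (hβA : 0 < βA) (hβI : 0 < βI)
    (S A I : ℝ) (hS : 0 ≤ S) (hA : 0 ≤ A) (hI : 0 ≤ I) (hsum : S + A + I ≤ 1)
    (heqS : μ - (βA * A + βI * I) * S - (μ + ν + γ) * S + γ * (1 - A - I) = 0)
    (heqA : (βA * A + βI * I) * S - (α + δA + μ) * A = 0)
    (heqI : α * A - (δI + μ) * I = 0)
    (hbd : S = 0 ∨ A = 0 ∨ I = 0 ∨ S + A + I = 1) :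
    S = (μ + γ) / (μ + ν + γ) ∧ A = 0 ∧ I = 0 := by
  have hden : 0 < μ + ν + γ := by linarith
  -- main helper: A = 0 implies the conclusion
  have key : A = 0 → S = (μ + γ) / (μ + ν + γ) ∧ A = 0 ∧ I = 0 := by
    intro hA0
    have hI0 : I = 0 := by
      rw [hA0] at heqI
      have : (δI + μ) * I = 0 := by linarith
      have := mul_eq_zero.mp this
      rcases this with h | h
      · linarith
      · exact h
    refine ⟨?_, hA0, hI0⟩
    rw [hA0, hI0] at heqS
    field_simp
    linarith
  rcases hbd with h0 | h0 | h0 | h0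
  · -- S = 0 leads to contradiction
    exfalso
    rw [h0] at heqA heqS
    have hA0 : A = 0 := by
      have : (α + δA + μ) * A = 0 := by linarith
      rcases mul_eq_zero.mp this with h | h
      · linarith
      · exact h
    have hI0 : I = 0 := by
      rw [hA0] at heqI
      rcases mul_eq_zero.mp (by linarith : (δI + μ) * I = 0) with h | h
      · linarith
      · exact h
    rw [hA0, hI0] at heqS
    simp at heqS
    linarith
  · exact key h0
  · -- I = 0 implies A = 0
    apply key
    rw [h0] at heqI
    rcases mul_eq_zero.mp (by linarith : α * A = 0) with h | h
    · linarith
    · exact h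
  · -- S + A + I = 1 : summing gives ν S + δA A + δI I = 0
    have hzero : ν * S + δA * A + δI * I = 0 := by nlinarith [heqS, heqA, heqI]
    have hS0 : S = 0 := by nlinarith [mul_nonneg hν.le hS, mul_nonneg hδA.le hA, mul_nonneg hδI.le hI]
    have hA0 : A = 0 := by nlinarith [mul_nonneg hν.le hS, mul_nonneg hδA.le hA, mul_nonneg hδI.le hI]
    have hI0 : I = 0 := by nlinarith [mul_nonneg hν.le hS, mul_nonneg hδA.le hA, mul_nonneg hδI.le hI]
    exfalso
    rw [hS0, hA0, hI0] at h0
    norm_num at h0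
end

section
/- Consider the reduced system S' = μ − βMS − (μ+ν+γ)S + γ(1−M), M' = βMS − (δ+μ)M with positive parameters, and let (S*, M*) be an equilibrium with M* > 0, so that βS* = δ+μ and μ+γ = βM*S* + (μ+ν+γ)S* + γM*. Define V(S,M) = ½(S−S*)² + w(M − M* − M* ln(M/M*)) with w = (βS*+γ)/β. Then along any solution with S, M > 0, dV/dt ≤ −(βM + μ+ν+γ)(S−S*)² ≤ 0. -/
/-!
At an endemic equilibrium the right-hand sides are linear in the deviations:
`S' = -(βM + μ + ν + γ)(S - S*) - (βS* + γ)(M - M*)` and `M' = βM(S - S*)`.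
Along solutions the logarithmic term of `V` contributes `w(1 - M*/M) M' = wβ(M - M*)(S - S*)`,
so the weight `w = (βS* + γ)/β` cancels the cross term exactly and `dV/dt` equals
`-(βM + μ + ν + γ)(S - S*)²`.
-/

section SAIRS

variable {μ ν γ β δ Sstar Mstar : ℝ} (S M : ℝ)

theorem susceptible_rate_eq_of_equilibrium
    (heq2 : μ + γ = β * Mstar * Sstar + (μ + ν + γ) * Sstar + γ * Mstar) :
    μ - β * M * S - (μ + ν + γ) * S + γ * (1 - M) =
      -(β * M + μ + ν + γ) * (S - Sstar) - (β * Sstar + γ) * (M - Mstar) := by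
  linear_combination heq2

theorem infective_rate_eq_of_equilibrium (heq1 : β * Sstar = δ + μ) :
    β * M * S - (δ + μ) * M = β * M * (S - Sstar) := by
  linear_combination M * heq1

theorem weighted_log_term_eq (c : ℝ) (hβ : β ≠ 0) (hM : M ≠ 0) :
    c / β * (1 - Mstar / M) * (β * M * (S - Sstar)) = c * (M - Mstar) * (S - Sstar) := by
  field_simp

end SAIRS

theorem SAIRS_equal_rates_lyapunov_general
    (μ ν γ β δ : ℝ)
    (hμ : 0 < μ) (hν : 0 < ν) (hγ : 0 < γ) (hβ : 0 < β)
    (Sstar Mstar : ℝ)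
    (heq1 : β * Sstar = δ + μ)
    (heq2 : μ + γ = β * Mstar * Sstar + (μ + ν + γ) * Sstar + γ * Mstar)
    (S M : ℝ) (hM : 0 < M) :
    let w := (β * Sstar + γ) / β
    let dV := (S - Sstar) * (μ - β * M * S - (μ + ν + γ) * S + γ * (1 - M))
      + w * (1 - Mstar / M) * (β * M * S - (δ + μ) * M)
    dV ≤ -(β * M + μ + ν + γ) * (S - Sstar) ^ 2 ∧
    -(β * M + μ + ν + γ) * (S - Sstar) ^ 2 ≤ 0 := by
  intro w dV
  have hdV : dV = -(β * M + μ + ν + γ) * (S - Sstar) ^ 2 := by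
    simp only [dV, w, susceptible_rate_eq_of_equilibrium S M heq2,
      infective_rate_eq_of_equilibrium S M heq1, weighted_log_term_eq S M _ hβ.ne' hM.ne']
    ring
  have hrate : 0 < β * M + μ + ν + γ := by positivity
  exact ⟨hdV.le, (neg_mul _ _).trans_le (neg_nonpos.2 (mul_nonneg hrate.le (sq_nonneg _)))⟩

/-- Lyapunov derivative bound for the SAIRS model with β_A = β_I = β and
δ_A = δ_I = δ, written in terms of M = A + I: with
w = (βS*+γ)/β, the derivative of V = ½(S−S*)² + w(M − M* − M* ln(M/M*))
along solutions satisfies dV/dt ≤ −(βM + μ+ν+γ)(S−S*)² ≤ 0. -/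
theorem SAIRS_equal_rates_lyapunov
    (μ ν γ β δ : ℝ)
    (hμ : 0 < μ) (hν : 0 < ν) (hγ : 0 < γ) (hβ : 0 < β) (hδ : 0 < δ)
    (Sstar Mstar : ℝ) (hSs : 0 < Sstar) (hMs : 0 < Mstar)
    (heq1 : β * Sstar = δ + μ)
    (heq2 : μ + γ = β * Mstar * Sstar + (μ + ν + γ) * Sstar + γ * Mstar)
    (S M : ℝ) (hS : 0 < S) (hM : 0 < M) :
    let w := (β * Sstar + γ) / β
    let dV := (S - Sstar) * (μ - β * M * S - (μ + ν + γ) * S + γ * (1 - M))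
      + w * (1 - Mstar / M) * (β * M * S - (δ + μ) * M)
    dV ≤ -(β * M + μ + ν + γ) * (S - Sstar) ^ 2 ∧
    -(β * M + μ + ν + γ) * (S - Sstar) ^ 2 ≤ 0 :=
  SAIRS_equal_rates_lyapunov_general μ ν γ β δ hμ hν hγ hβ Sstar Mstar heq1 heq2 S M hM
end
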